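/- The bracket defined on n = (V ⊗ W) ⊕ V* ⊕ W by [v₁⊗w₁, v₂⊗w₂] = ω(w₁,w₂)·B(v₁,v₂), [φ, v⊗w] = φ(v)·w (with all other brackets between graded pieces zero, extended antisymmetrically) satisfies the Jacobi identity, and hence makes n a Lie algebra. -/

import Mathlib

open TensorProduct

variable {V W : Type*} [AddCommGroup V] [Module ℂ V] [AddCommGroup W] [Module ℂ W]

/-- The underlying space of the Lie algebra `n = (V ⊗ W) ⊕ V* ⊕ W`. -/
abbrev nSpace (V W : Type*) [AddCommGroup V] [Module ℂ V] [AddCommGroup W] [Module ℂ W] :=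
  (V ⊗[ℂ] W) × Module.Dual ℂ V × W

/-- The bilinear map `(V ⊗ W) × (V ⊗ W) → V*` sending `(v₁⊗w₁, v₂⊗w₂)` to `ω(w₁,w₂) • B(v₁,v₂)`,
where `B v₁ v₂ = c v₁ v₂`. -/
noncomputable def brOne (c : V →ₗ[ℂ] V →ₗ[ℂ] Module.Dual ℂ V) (ω : W →ₗ[ℂ] W →ₗ[ℂ] ℂ) :
    (V ⊗[ℂ] W) →ₗ[ℂ] (V ⊗[ℂ] W) →ₗ[ℂ] Module.Dual ℂ V :=
  TensorProduct.curry ((TensorProduct.rid ℂ (Module.Dual ℂ V)).toLinearMap ∘ₗ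
    TensorProduct.map (TensorProduct.lift c) (TensorProduct.lift ω) ∘ₗ
    (TensorProduct.tensorTensorTensorComm ℂ V W V W).toLinearMap)

/-- The pairing `V* × (V ⊗ W) → W` sending `(φ, v⊗w)` to `φ(v) • w`. -/
noncomputable def brTwo (φ : Module.Dual ℂ V) : (V ⊗[ℂ] W) →ₗ[ℂ] W :=
  (TensorProduct.lid ℂ W).toLinearMap ∘ₗ TensorProduct.map φ LinearMap.id

/-- The bracket on `n = (V ⊗ W) ⊕ V* ⊕ W`:
`[v₁⊗w₁, v₂⊗w₂] = ω(w₁,w₂) B(v₁,v₂)`, `[φ, v⊗w] = φ(v) w`, other brackets zero,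
extended antisymmetrically and bilinearly. -/
noncomputable def nBracket (c : V →ₗ[ℂ] V →ₗ[ℂ] Module.Dual ℂ V) (ω : W →ₗ[ℂ] W →ₗ[ℂ] ℂ)
    (x y : nSpace V W) : nSpace V W :=
  (0, brOne c ω x.1 y.1, brTwo x.2.1 y.1 - brTwo y.2.1 x.1)

/-!
Only the `W`-component of a double bracket survives: on pure tensors
`[[v₁⊗w₁, v₂⊗w₂], v₃⊗w₃] = c(v₁,v₂,v₃) ω(w₁,w₂) w₃`. Since `c` is totally symmetric, the
Jacobiator is `c(v₁,v₂,v₃) (ω(w₁,w₂) w₃ + ω(w₂,w₃) w₁ + ω(w₃,w₁) w₂)`, and the bracketed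
expression is an alternating trilinear map on the 2-dimensional space `W`, hence zero.
-/

theorem LinearMap.IsAlt.smul_add_smul_add_smul_eq_zero {K E : Type*} [Field K] [AddCommGroup E]
    [Module K E] (hE : Module.finrank K E = 2) {ω : E →ₗ[K] E →ₗ[K] K} (hω : ω.IsAlt)
    (e₁ e₂ e₃ : E) : ω e₁ e₂ • e₃ + ω e₂ e₃ • e₁ + ω e₃ e₁ • e₂ = 0 := by
  have : FiniteDimensional K E := .of_finrank_pos (by omega)
  let b := Module.finBasisOfFinrankEq K E hE
  have hb (e : E) : e = b.repr e 0 • b 0 + b.repr e 1 • b 1 := by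
    rw [← b.sum_repr e, Fin.sum_univ_two]
    simp
  rw [hb e₁, hb e₂, hb e₃]
  simp only [map_add, map_smul, LinearMap.add_apply, LinearMap.smul_apply, smul_eq_mul,
    hω.self_eq_zero, ← hω.neg (b 0) (b 1)]
  module

theorem brOne_tmul (c : V →ₗ[ℂ] V →ₗ[ℂ] Module.Dual ℂ V) (ω : W →ₗ[ℂ] W →ₗ[ℂ] ℂ)
    (v₁ v₂ : V) (w₁ w₂ : W) : brOne c ω (v₁ ⊗ₜ w₁) (v₂ ⊗ₜ w₂) = ω w₁ w₂ • c v₁ v₂ := by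
  simp [brOne]

theorem brTwo_tmul (φ : Module.Dual ℂ V) (v : V) (w : W) : brTwo φ (v ⊗ₜ w) = φ v • w := by
  simp [brTwo]

theorem brOne_swap {c : V →ₗ[ℂ] V →ₗ[ℂ] Module.Dual ℂ V} (hc : ∀ u v w : V, c u v w = c v u w)
    {ω : W →ₗ[ℂ] W →ₗ[ℂ] ℂ} (hω : ω.IsAlt) (x y : V ⊗[ℂ] W) :
    brOne c ω y x = -brOne c ω x y := by
  suffices h : (brOne c ω).flip = -brOne c ω from congr($h x y)
  ext v₁ w₁ v₂ w₂ u
  simp [brOne_tmul, ← hω.neg w₁ w₂, hc v₂ v₁ u]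

noncomputable def brTwoₗ : Module.Dual ℂ V →ₗ[ℂ] (V ⊗[ℂ] W) →ₗ[ℂ] W :=
  ((TensorProduct.mapBilinear (RingHom.id ℂ) V W ℂ W).flip LinearMap.id).compr₂
    (TensorProduct.lid ℂ W).toLinearMap

theorem brTwoₗ_apply (φ : Module.Dual ℂ V) : (brTwoₗ φ : (V ⊗[ℂ] W) →ₗ[ℂ] W) = brTwo φ := rfl

theorem brTwo_brOne_cyclic {c : V →ₗ[ℂ] V →ₗ[ℂ] Module.Dual ℂ V}
    (hc₁ : ∀ u v w : V, c u v w = c v u w) (hc₂ : ∀ u v w : V, c u v w = c u w v)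
    (hW : Module.finrank ℂ W = 2) {ω : W →ₗ[ℂ] W →ₗ[ℂ] ℂ} (hω : ω.IsAlt) (a b d : V ⊗[ℂ] W) :
    brTwo (brOne c ω a b) d + brTwo (brOne c ω b d) a + brTwo (brOne c ω d a) b = 0 := by
  let J := (brOne c ω).compr₂ (brTwoₗ (W := W))
  -- `rot f a b d = f b d a`
  let rot : ((V ⊗[ℂ] W) →ₗ[ℂ] (V ⊗[ℂ] W) →ₗ[ℂ] (V ⊗[ℂ] W) →ₗ[ℂ] W) → _ :=
    fun f => (LinearMap.lflip.toLinearMap ∘ₗ f).flip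
  suffices h : J + rot J + rot (rot J) = 0 by
    simpa [J, rot, brTwoₗ_apply] using congr($h a b d)
  ext v₁ w₁ v₂ w₂ v₃ w₃
  simp only [J, rot, LinearMap.add_apply, LinearMap.zero_apply,
    TensorProduct.AlgebraTensorModule.curry_apply, TensorProduct.curry_apply,
    LinearMap.coe_restrictScalars, LinearMap.compr₂_apply, LinearMap.flip_apply,
    LinearMap.comp_apply, LinearEquiv.coe_coe, LinearMap.lflip_apply, brTwoₗ_apply, brOne_tmul,
    brTwo_tmul, LinearMap.smul_apply]
  have h₂₃₁ : c v₂ v₃ v₁ = c v₁ v₂ v₃ := by rw [hc₂, hc₁]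
  have h₃₁₂ : c v₃ v₁ v₂ = c v₁ v₂ v₃ := by rw [hc₁, hc₂]
  rw [h₂₃₁, h₃₁₂]
  simp only [smul_eq_mul, mul_comm _ (c v₁ v₂ v₃), mul_smul, ← smul_add,
    hω.smul_add_smul_add_smul_eq_zero hW, smul_zero]

theorem nBracket_nBracket (c : V →ₗ[ℂ] V →ₗ[ℂ] Module.Dual ℂ V) (ω : W →ₗ[ℂ] W →ₗ[ℂ] ℂ)
    (x y z : nSpace V W) :
    nBracket c ω (nBracket c ω x y) z = (0, 0, brTwo (brOne c ω x.1 y.1) z.1) := by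
  simp [nBracket]

theorem nBracket_jacobi_general
    (hW : Module.finrank ℂ W = 2)
    (c : V →ₗ[ℂ] V →ₗ[ℂ] Module.Dual ℂ V)
    (hc₁ : ∀ u v w : V, c u v w = c v u w) (hc₂ : ∀ u v w : V, c u v w = c u w v)
    (ω : W →ₗ[ℂ] W →ₗ[ℂ] ℂ) (hω : ∀ w : W, ω w w = 0) :
    (∀ x y : nSpace V W, nBracket c ω x y = - nBracket c ω y x) ∧
    (∀ x y z : nSpace V W,
      nBracket c ω (nBracket c ω x y) z + nBracket c ω (nBracket c ω y z) x +
        nBracket c ω (nBracket c ω z x) y = 0) := by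
  refine ⟨fun x y => ?_, fun x y z => ?_⟩
  · simp only [nBracket, brOne_swap hc₁ hω x.1 y.1, Prod.neg_mk, neg_zero, neg_neg, neg_sub]
  · simp only [nBracket_nBracket, Prod.mk_add_mk, add_zero, brTwo_brOne_cyclic hc₁ hc₂ hW hω]
    rfl

/-- The bracket on `n = (V ⊗ W) ⊕ V* ⊕ W` is antisymmetric and satisfies the Jacobi
identity, hence makes `n` a Lie algebra.  Here `c` is a symmetric trilinear form on `V`
(with `B v₁ v₂ = c v₁ v₂ ∈ V*`), `ω` is a nonzero alternating form on the 2-dimensional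
space `W`. -/
theorem nBracket_jacobi
    (hW : Module.finrank ℂ W = 2)
    (c : V →ₗ[ℂ] V →ₗ[ℂ] Module.Dual ℂ V)
    (hc₁ : ∀ u v w : V, c u v w = c v u w) (hc₂ : ∀ u v w : V, c u v w = c u w v)
    (ω : W →ₗ[ℂ] W →ₗ[ℂ] ℂ) (hω : ∀ w : W, ω w w = 0) (hω0 : ω ≠ 0) :
    (∀ x y : nSpace V W, nBracket c ω x y = - nBracket c ω y x) ∧
    (∀ x y z : nSpace V W,
      nBracket c ω (nBracket c ω x y) z + nBracket c ω (nBracket c ω y z) x +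
        nBracket c ω (nBracket c ω z x) y = 0) :=
  nBracket_jacobi_general hW c hc₁ hc₂ ω hω
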